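/- Fix integers q ≥ 2, n ≥ 1 and M ≥ 1. Given probability mass functions Q_1, …, Q_M on (Fin q)^n and subsets D_1, …, D_M ⊆ (Fin q)^n, there exist probability mass functions Q'_1, …, Q'_M on the set of types of (Fin q)^n and functions P_1, …, P_M from the set of types to [0,1] such that for all i ≠ j, Σ_c Q'_i(c)·P_j(c) = Σ_x Q_i(x)·|T_x ∩ D_j|/|T_x|, and for all i, Σ_c Q'_i(c)·(1 − P_i(c)) = Σ_x Q_i(x)·|T_x \ D_i|/|T_x|. That is, every ID code with deterministic decoders for the q-ary uniform permutation channel induces an ID code with stochastic decoders for the noiseless channel over types having exactly the same error probabilities λ_{i→j} and λ_{i↛i}. -/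

import Mathlib

open Finset

/-- The type class of `x`: all vectors obtained from `x` by permuting its coordinates. -/
def typeClass (q n : ℕ) (x : Fin n → Fin q) : Finset (Fin n → Fin q) :=
  Finset.univ.filter fun y => ∃ σ : Equiv.Perm (Fin n), y = fun k => x (σ k)

/-- `Q` is a probability mass function on a finite type. -/
def IsPMF {α : Type*} [Fintype α] (Q : α → ℝ) : Prop :=
  (∀ a, 0 ≤ Q a) ∧ ∑ a, Q a = 1

/-- False-acceptance probability `λ_{i→j}` of an `(n, M)` ID code for the `q`-ary
uniform permutation channel. -/
noncomputable def lamFA (q n : ℕ) {M : ℕ} (Q : Fin M → (Fin n → Fin q) → ℝ)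
    (D : Fin M → Finset (Fin n → Fin q)) (i j : Fin M) : ℝ :=
  ∑ x, Q i x * (((typeClass q n x ∩ D j).card : ℝ) / ((typeClass q n x).card : ℝ))

/-- Missed-detection probability `λ_{i↛i}` of an `(n, M)` ID code for the `q`-ary
uniform permutation channel. -/
noncomputable def lamMD (q n : ℕ) {M : ℕ} (Q : Fin M → (Fin n → Fin q) → ℝ)
    (D : Fin M → Finset (Fin n → Fin q)) (i : Fin M) : ℝ :=
  ∑ x, Q i x * (((typeClass q n x \ D i).card : ℝ) / ((typeClass q n x).card : ℝ))


/-- The type (empirical histogram) of a vector `x ∈ (Fin q)^n`. -/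
def typeOf (q n : ℕ) (x : Fin n → Fin q) : Fin q → ℕ :=
  fun a => (Finset.univ.filter fun k => x k = a).card

/-- The set of all types on `(Fin q)^n` (realized as histograms of actual vectors;
for `q ≥ 1` this is exactly the set of `c : Fin q → ℕ` with `∑ a, c a = n`). -/
def typesOf (q n : ℕ) : Finset (Fin q → ℕ) :=
  Finset.image (typeOf q n) Finset.univ

/-!
The type classes are exactly the fibres `T_c` of the type map `typeOf`: a permutation preserves
the count of every letter, and two vectors with equal counts are matched letter by letter by a
bijection of the coordinates. Hence both error probabilities have the form `∑ₓ Q x · g (typeOf x)`,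
with `g c = |T_c ∩ D| / |T_c|` or `g c = |T_c \ D| / |T_c| = 1 - |T_c ∩ D| / |T_c|`.
Grouping the sum by type turns it into `∑_c Q' c · g c`, where `Q'` is the push-forward of `Q`
along `typeOf`; the stochastic decoder accepts the type `c` with probability `|T_c ∩ D| / |T_c|`.
-/

section Types

variable {q n : ℕ}

lemma typeOf_comp_perm (x : Fin n → Fin q) (σ : Equiv.Perm (Fin n)) :
    typeOf q n (fun k => x (σ k)) = typeOf q n x := by
  funext a
  simp only [typeOf, card_filter]
  exact Equiv.sum_comp σ fun k => if x k = a then 1 else 0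

lemma exists_perm_of_typeOf_eq {x y : Fin n → Fin q} (h : typeOf q n y = typeOf q n x) :
    ∃ σ : Equiv.Perm (Fin n), y = fun k => x (σ k) := by
  have fiberEquiv : ∀ a, {k // y k = a} ≃ {k // x k = a} := fun a =>
    Fintype.equivOfCardEq (by simpa only [Fintype.card_subtype, typeOf] using congrFun h a)
  exact ⟨Equiv.ofFiberEquiv fiberEquiv,
    funext fun k => (Equiv.ofFiberEquiv_map fiberEquiv k).symm⟩

def typeFiber (q n : ℕ) (c : Fin q → ℕ) : Finset (Fin n → Fin q) :=
  univ.filter fun y => typeOf q n y = c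

lemma typeClass_eq_typeFiber (x : Fin n → Fin q) :
    typeClass q n x = typeFiber q n (typeOf q n x) := by
  ext y
  simp only [typeClass, typeFiber, mem_filter, mem_univ, true_and]
  constructor
  · rintro ⟨σ, rfl⟩
    exact typeOf_comp_perm x σ
  · exact exists_perm_of_typeOf_eq

lemma sum_mul_comp_typeOf (Q : (Fin n → Fin q) → ℝ) (g : (Fin q → ℕ) → ℝ) :
    ∑ x, Q x * g (typeOf q n x) =
      ∑ c : {c // c ∈ typesOf q n}, (∑ x ∈ typeFiber q n c, Q x) * g c := by
  rw [sum_coe_sort (typesOf q n) fun c => (∑ x ∈ typeFiber q n c, Q x) * g c,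
    ← sum_fiberwise_of_maps_to (fun x _ => mem_image_of_mem (typeOf q n) (mem_univ x))]
  refine sum_congr rfl fun c _ => ?_
  rw [sum_mul]
  exact sum_congr rfl fun x hx => by rw [(mem_filter.1 hx).2]

lemma sum_typeFiber_eq_sum (Q : (Fin n → Fin q) → ℝ) :
    ∑ c : {c // c ∈ typesOf q n}, ∑ x ∈ typeFiber q n c, Q x = ∑ x, Q x := by
  simpa using (sum_mul_comp_typeOf Q fun _ => 1).symm

lemma mem_typeFiber_typeOf (x : Fin n → Fin q) : x ∈ typeFiber q n (typeOf q n x) := by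
  simp [typeFiber]

end Types

lemma one_sub_card_inter_div_card {α : Type*} [DecidableEq α] {s : Finset α} (hs : s.Nonempty)
    (t : Finset α) : 1 - (#(s ∩ t) : ℝ) / #s = #(s \ t) / #s := by
  have hcard : (#(s \ t) : ℝ) + #(s ∩ t) = #s := by exact_mod_cast card_sdiff_add_card_inter s t
  have hpos : (0 : ℝ) < #s := by exact_mod_cast hs.card_pos
  field_simp
  linarith

lemma card_inter_div_card_mem_Icc {α : Type*} [DecidableEq α] (s t : Finset α) :
    (#(s ∩ t) : ℝ) / #s ∈ Set.Icc 0 1 :=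
  ⟨by positivity,
    div_le_one_of_le₀ (by exact_mod_cast card_le_card inter_subset_left) (Nat.cast_nonneg _)⟩

noncomputable def typeAcceptProb (q n : ℕ) (D : Finset (Fin n → Fin q)) (c : Fin q → ℕ) :
    ℝ :=
  (#(typeFiber q n c ∩ D) : ℝ) / #(typeFiber q n c)

lemma lamFA_eq_sum_typeAcceptProb {q n M : ℕ} (Q : Fin M → (Fin n → Fin q) → ℝ)
    (D : Fin M → Finset (Fin n → Fin q)) (i j : Fin M) :
    lamFA q n Q D i j = ∑ x, Q i x * typeAcceptProb q n (D j) (typeOf q n x) := by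
  simp only [lamFA, typeAcceptProb, typeClass_eq_typeFiber]

lemma lamMD_eq_sum_one_sub_typeAcceptProb {q n M : ℕ} (Q : Fin M → (Fin n → Fin q) → ℝ)
    (D : Fin M → Finset (Fin n → Fin q)) (i : Fin M) :
    lamMD q n Q D i = ∑ x, Q i x * (1 - typeAcceptProb q n (D i) (typeOf q n x)) := by
  refine sum_congr rfl fun x _ => ?_
  rw [typeAcceptProb, one_sub_card_inter_div_card ⟨x, mem_typeFiber_typeOf x⟩,
    typeClass_eq_typeFiber]

theorem permutationToNoiselessTypes_general (q n M : ℕ)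
    (Q : Fin M → (Fin n → Fin q) → ℝ) (hQ : ∀ i, IsPMF (Q i))
    (D : Fin M → Finset (Fin n → Fin q)) :
    ∃ (Q' : Fin M → {c // c ∈ typesOf q n} → ℝ)
      (P : Fin M → {c // c ∈ typesOf q n} → ℝ),
      (∀ i, IsPMF (Q' i)) ∧
      (∀ i c, 0 ≤ P i c ∧ P i c ≤ 1) ∧
      (∀ i j, i ≠ j → ∑ c, Q' i c * P j c = lamFA q n Q D i j) ∧
      (∀ i, ∑ c, Q' i c * (1 - P i c) = lamMD q n Q D i) := by
  refine ⟨fun i c => ∑ x ∈ typeFiber q n c, Q i x, fun j c => typeAcceptProb q n (D j) c,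
    fun i => ⟨fun c => sum_nonneg fun x _ => (hQ i).1 x,
      (sum_typeFiber_eq_sum (Q i)).trans (hQ i).2⟩,
    fun j c => card_inter_div_card_mem_Icc _ _, fun i j _ => ?_, fun i => ?_⟩
  · rw [lamFA_eq_sum_typeAcceptProb]
    exact (sum_mul_comp_typeOf (Q i) (typeAcceptProb q n (D j))).symm
  · rw [lamMD_eq_sum_one_sub_typeAcceptProb]
    exact (sum_mul_comp_typeOf (Q i) fun c => 1 - typeAcceptProb q n (D i) c).symm

/-- Every ID code with deterministic decoders for the `q`-ary uniform permutation channel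
induces an ID code with stochastic decoders for the noiseless channel over types having
exactly the same error probabilities `λ_{i→j}` and `λ_{i↛i}`. -/
theorem permutationToNoiselessTypes (q n M : ℕ) (hq : 2 ≤ q) (hn : 1 ≤ n) (hM : 1 ≤ M)
    (Q : Fin M → (Fin n → Fin q) → ℝ) (hQ : ∀ i, IsPMF (Q i))
    (D : Fin M → Finset (Fin n → Fin q)) :
    ∃ (Q' : Fin M → {c // c ∈ typesOf q n} → ℝ)
      (P : Fin M → {c // c ∈ typesOf q n} → ℝ),
      (∀ i, IsPMF (Q' i)) ∧
      (∀ i c, 0 ≤ P i c ∧ P i c ≤ 1) ∧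
      (∀ i j, i ≠ j → ∑ c, Q' i c * P j c = lamFA q n Q D i j) ∧
      (∀ i, ∑ c, Q' i c * (1 - P i c) = lamMD q n Q D i) :=
  permutationToNoiselessTypes_general q n M Q hQ D
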